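/- arXiv:1106.2108 — 3 statements merged into one kernel-verified Lean document; each statement's English description precedes it below -/
import Mathlib

section
/- Let f be 1-periodic and C^1 with modulus of continuity ω(f',δ) of f'. Then there exists a constant C ≤ 1 such that for every j ≥ 1, |R_j(f)| ≤ C · ω(f', 1/j)/(2j), where R_j(f) = (1/j) Σ_{k=0}^{j-1} f(k/j) - ∫_0^1 f(x) dx. -/
open MeasureTheory Finset

/-- Trapezoidal-rule error `R_j(f)` for a 1-periodic function. -/
noncomputable def trapError (f : ℝ → ℝ) (j : ℕ) : ℝ :=
  (1 / (j : ℝ)) * ∑ k ∈ Finset.range j, f ((k : ℝ) / (j : ℝ)) - ∫ x in (0:ℝ)..1, f x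

/-- `ω` is the modulus of continuity of `g`: `ω δ = sup {|g(x+h)-g(x)| : |h| ≤ δ}`. -/
def IsModulusOf (g : ℝ → ℝ) (ω : ℝ → ℝ) : Prop :=
  ∀ δ : ℝ, 0 ≤ δ → IsLUB {y : ℝ | ∃ x h : ℝ, |h| ≤ δ ∧ y = |g (x + h) - g x|} (ω δ)

/-! On a cell `[a, b]` with midpoint `m`, integrating `(f' x - f' m) (x - m)` by parts turns it into
the local trapezoidal error `(b - a)/2 · (f a + f b) - ∫_a^b f`, which is therefore at most
`ω(f', b - a) · (b - a)² / 2` in absolute value. For a 1-periodic `f` the composite rule with `j`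
nodes is the sum of the `j` local trapezoidal rules on the cells `[k/j, (k+1)/j]`, because
`f 1 = f 0`; summing the cell bounds with `b - a = 1/j` gives `|R_j f| ≤ ω(f', 1/j) / (2j)`. -/

lemma IsModulusOf.abs_sub_le {g ω : ℝ → ℝ} (hω : IsModulusOf g ω) {δ x y : ℝ} (hδ : 0 ≤ δ)
    (hxy : |y - x| ≤ δ) : |g y - g x| ≤ ω δ :=
  (hω δ hδ).1 ⟨x, y - x, hxy, by rw [add_sub_cancel]⟩

noncomputable def trapezoidCellError (f : ℝ → ℝ) (a b : ℝ) : ℝ :=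
  (b - a) / 2 * (f a + f b) - ∫ x in a..b, f x

section Cell

variable {f f' : ℝ → ℝ} {a b : ℝ}

theorem trapezoidCellError_eq_integral (hf : ∀ x ∈ Set.uIcc a b, HasDerivAt f (f' x) x)
    (hf' : IntervalIntegrable f' volume a b) (c : ℝ) :
    trapezoidCellError f a b = ∫ x in a..b, (f' x - c) * (x - (a + b) / 2) := by
  set m := (a + b) / 2
  have hfi : IntervalIntegrable f volume a b :=
    ContinuousOn.intervalIntegrable fun x hx => (hf x hx).continuousAt.continuousWithinAt
  have hki : IntervalIntegrable (fun x => (f' x - c) * (x - m)) volume a b :=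
    (hf'.sub intervalIntegrable_const).mul_continuousOn (continuousOn_id.sub continuousOn_const)
  -- `(x - m) ^ 2` takes the same value at `a` and at `b`, so the constant `c` is arbitrary.
  have hprimitive : ∀ x ∈ Set.uIcc a b, HasDerivAt (fun x => f x * (x - m) - c * (x - m) ^ 2 / 2)
      ((f' x - c) * (x - m) + f x) x := by
    intro x hx
    have hx' := (hasDerivAt_id' x).sub_const m
    refine (((hf x hx).mul hx').sub (((hx'.pow 2).const_mul c).div_const 2)).congr_deriv ?_
    ring
  have hftc := intervalIntegral.integral_eq_sub_of_hasDerivAt hprimitive (hki.add hfi)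
  rw [intervalIntegral.integral_add hki hfi] at hftc
  rw [trapezoidCellError]
  linear_combination -hftc

theorem abs_trapezoidCellError_le (hab : a ≤ b) (hf : ∀ x ∈ Set.uIcc a b, HasDerivAt f (f' x) x)
    (hf' : IntervalIntegrable f' volume a b) {ε : ℝ}
    (hε : ∀ x ∈ Set.Icc a b, ∀ y ∈ Set.Icc a b, |f' x - f' y| ≤ ε) :
    |trapezoidCellError f a b| ≤ ε * (b - a) ^ 2 / 2 := by
  set m := (a + b) / 2 with hm_def
  have hm : m ∈ Set.Icc a b := ⟨by rw [hm_def]; linarith, by rw [hm_def]; linarith⟩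
  have hpointwise : ∀ x ∈ Set.uIoc a b, ‖(f' x - f' m) * (x - m)‖ ≤ ε * ((b - a) / 2) := by
    intro x hx
    rw [Set.uIoc_of_le hab] at hx
    have hxm : |x - m| ≤ (b - a) / 2 := abs_le.2 ⟨by linarith [hx.1], by linarith [hx.2]⟩
    rw [Real.norm_eq_abs, abs_mul]
    exact mul_le_mul (hε x (Set.Ioc_subset_Icc_self hx) m hm) hxm (abs_nonneg _)
      ((abs_nonneg _).trans (hε m hm m hm))
  calc |trapezoidCellError f a b|
      = ‖∫ x in a..b, (f' x - f' m) * (x - m)‖ := by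
        rw [trapezoidCellError_eq_integral hf hf' (f' m), Real.norm_eq_abs]
    _ ≤ ε * ((b - a) / 2) * |b - a| := intervalIntegral.norm_integral_le_of_norm_le_const hpointwise
    _ = ε * (b - a) ^ 2 / 2 := by rw [abs_of_nonneg (sub_nonneg.2 hab)]; ring

end Cell

theorem trapError_eq_sum_trapezoidCellError {f : ℝ → ℝ} (hper : Function.Periodic f 1)
    (hf : Continuous f) {j : ℕ} (hj : j ≠ 0) :
    trapError f j = ∑ k ∈ range j, trapezoidCellError f (k / j) ((k + 1 : ℕ) / j) := by
  set node : ℕ → ℝ := fun k => k / j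
  have hj' : (j : ℝ) ≠ 0 := Nat.cast_ne_zero.2 hj
  have hwidth : ∀ k : ℕ, node (k + 1) - node k = 1 / j := fun k => by
    simp only [node]; push_cast; ring
  have hends : f (node j) = f (node 0) := by
    simpa [node, hj'] using hper 0
  have hshift : ∑ k ∈ range j, f (node (k + 1)) = ∑ k ∈ range j, f (node k) := by
    have := sum_range_succ (fun k => f (node k)) j
    have := sum_range_succ' (fun k => f (node k)) j
    linarith
  have hintegral : ∫ x in (0 : ℝ)..1, f x = ∑ k ∈ range j, ∫ x in node k..node (k + 1), f x := by
    rw [intervalIntegral.sum_integral_adjacent_intervals fun k _ => hf.intervalIntegrable _ _]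
    simp [node, hj']
  change _ = ∑ k ∈ range j, trapezoidCellError f (node k) (node (k + 1))
  simp only [trapezoidCellError, sum_sub_distrib, hwidth]
  rw [trapError, hintegral, ← mul_sum, sum_add_distrib, hshift]
  ring

theorem stmt_4 (f : ℝ → ℝ) (hper : Function.Periodic f 1)
    (hf : ContDiff ℝ 1 f) (ω : ℝ → ℝ) (hω : IsModulusOf (deriv f) ω) :
    ∃ C : ℝ, C ≤ 1 ∧ ∀ j : ℕ, 1 ≤ j →
      |trapError f j| ≤ C * ω (1 / (j : ℝ)) / (2 * (j : ℝ)) := by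
  refine ⟨1, le_rfl, fun j hj => ?_⟩
  have hj' : (0 : ℝ) < j := by exact_mod_cast hj
  have hcell : ∀ k ∈ range j,
      |trapezoidCellError f (k / j) ((k + 1 : ℕ) / j)| ≤ ω (1 / j) * (1 / j) ^ 2 / 2 := by
    intro k _
    have hwidth : ((k + 1 : ℕ) : ℝ) / j - k / j = 1 / j := by push_cast; ring
    rw [← hwidth]
    refine abs_trapezoidCellError_le (by linarith [one_div_pos.2 hj'])
      (fun x _ => (hf.differentiable one_ne_zero x).hasDerivAt)
      ((hf.continuous_deriv le_rfl).intervalIntegrable _ _) fun x hx y hy => ?_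
    exact hω.abs_sub_le (by rw [hwidth]; positivity)
      (abs_sub_le_iff.2 ⟨by linarith [hx.2, hy.1], by linarith [hy.2, hx.1]⟩)
  calc |trapError f j|
      = |∑ k ∈ range j, trapezoidCellError f (k / j) ((k + 1 : ℕ) / j)| := by
        rw [trapError_eq_sum_trapezoidCellError hper hf.continuous (by omega)]
    _ ≤ ∑ k ∈ range j, |trapezoidCellError f (k / j) ((k + 1 : ℕ) / j)| := abs_sum_le_sum_abs _ _
    _ ≤ ∑ _k ∈ range j, ω (1 / j) * (1 / j) ^ 2 / 2 := sum_le_sum hcell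
    _ = 1 * ω (1 / j) / (2 * j) := by
        rw [sum_const, card_range, nsmul_eq_mul]
        field_simp
end

section
/- Fix θ > 0 and N ≥ 1, with J_N and K_N as in the Feller coupling (J_N = distance back from N to last success among ξ_1,…,ξ_N with ξ_1=1; K_N = distance to first success after N, for independent Bernoulli ξ_i with P[ξ_i=1] = θ/(θ+i-1)). Then for every j ≥ 1, P[J_N + K_N = j+1] ≤ θ/N. -/
open MeasureTheory ProbabilityTheory Finset Filter
open scoped ENNReal

/-!
`J_N = m` is an event of `σ(ξ_1, …, ξ_N)`, while `J_N + K_N = j + 1` with `J_N = m` forces the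
success `ξ_{N + j + 1 - m} = 1` at an index beyond `N`, hence independent of `{J_N = m}` and of
probability at most `θ / N`. Summing over the disjoint events `{J_N = m}` gives the bound. The
only subtlety is that `K_N` must be finite (an empty `sInf` is `0`), which holds almost surely
by the second Borel–Cantelli lemma since `∑ θ / (θ + i - 1) = ∞`.
-/

def IsDeterminedBy {Ω ι β : Type*} (ξ : ι → Ω → β) (S : Finset ι) (A : Set Ω) : Prop :=
  ∀ ω ω', (∀ i ∈ S, ξ i ω = ξ i ω') → ω ∈ A → ω' ∈ A

namespace IsDeterminedBy

variable {Ω ι β : Type*} {ξ : ι → Ω → β} {S : Finset ι} {A : Set Ω}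

theorem preimage_image_eq (hA : IsDeterminedBy ξ S A) :
    (fun ω (i : S) ↦ ξ i ω) ⁻¹' ((fun ω (i : S) ↦ ξ i ω) '' A) = A := by
  refine Set.Subset.antisymm ?_ (Set.subset_preimage_image _ _)
  rintro ω ⟨ω', hω', hξ⟩
  exact hA ω' ω (fun i hi ↦ congrFun hξ ⟨i, hi⟩) hω'

variable [MeasurableSpace Ω] [MeasurableSpace β] [Countable β] [MeasurableSingletonClass β]

theorem measurableSet (hmeas : ∀ i, Measurable (ξ i)) (hA : IsDeterminedBy ξ S A) :
    MeasurableSet A := by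
  rw [← hA.preimage_image_eq]
  exact measurable_pi_lambda (fun ω (i : S) ↦ ξ i ω) (fun i ↦ hmeas i)
    (Set.to_countable _).measurableSet

theorem measure_inter_preimage_eq_mul {μ : Measure Ω} (hmeas : ∀ i, Measurable (ξ i))
    (hindep : iIndepFun ξ μ) (hA : IsDeterminedBy ξ S A) {n : ι} (hn : n ∉ S) {t : Set β}
    (ht : MeasurableSet t) : μ (A ∩ ξ n ⁻¹' t) = μ A * μ (ξ n ⁻¹' t) := by
  have hST : Disjoint S {n} := disjoint_singleton_right.2 hn
  rw [← hA.preimage_image_eq]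
  exact (hindep.indepFun_finset S {n} hST hmeas).measure_inter_preimage_eq_mul _
    ((fun v ↦ v ⟨n, mem_singleton_self n⟩) ⁻¹' t) (Set.to_countable _).measurableSet
    (measurable_pi_apply _ ht)

end IsDeterminedBy

theorem ae_exists_gt_eq_true_of_tsum_eq_top {Ω : Type*} [MeasurableSpace Ω] {μ : Measure Ω}
    [IsProbabilityMeasure μ] {ξ : ℕ → Ω → Bool} (hmeas : ∀ i, Measurable (ξ i))
    (hindep : iIndepFun ξ μ) (hsum : ∑' n, μ (ξ n ⁻¹' {true}) = ⊤) (N : ℕ) :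
    ∀ᵐ ω ∂μ, ∃ n > N, ξ n ω = true := by
  have hsets : ∀ n, MeasurableSet (ξ n ⁻¹' {true}) := fun n ↦ hmeas n (measurableSet_singleton _)
  have hindep_sets : iIndepSet (fun n ↦ ξ n ⁻¹' {true}) μ :=
    (iIndepSet_iff_meas_biInter hsets).2 fun s ↦
      hindep.meas_biInter fun i _ ↦ ⟨{true}, measurableSet_singleton _, rfl⟩
  have hlimsup := measure_limsup_eq_one hsets hindep_sets hsum
  rw [← prob_compl_eq_zero_iff (MeasurableSet.measurableSet_limsup hsets)] at hlimsup
  filter_upwards [measure_eq_zero_iff_ae_notMem.1 hlimsup] with ω hω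
  exact frequently_atTop.1 (mem_limsup_iff_frequently_mem.1 (not_not.1 hω)) (N + 1)

theorem ENNReal.tsum_ofReal_div_add_natCast_eq_top {θ : ℝ} (hθ : 0 < θ) :
    ∑' n : ℕ, ENNReal.ofReal (θ / (θ + n)) = ⊤ := by
  by_contra h
  have hsum : Summable fun n : ℕ ↦ θ / (θ + n) := by
    refine (ENNReal.summable_toReal h).congr fun n ↦ ?_
    rw [ENNReal.toReal_ofReal (by positivity)]
  refine absurd ((Real.summable_one_div_nat_add_rpow θ 1).1 ((hsum.mul_left θ⁻¹).congr fun n ↦ ?_))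
    (lt_irrefl 1)
  rw [abs_of_pos (by positivity), Real.rpow_one]
  field_simp
  ring

theorem ENNReal.tsum_eq_top_of_eq_ofReal_div_add_sub_one {θ : ℝ} (hθ : 0 < θ) {p : ℕ → ℝ≥0∞}
    (hp : ∀ i, 1 ≤ i → p i = ENNReal.ofReal (θ / (θ + i - 1))) : ∑' i, p i = ⊤ := by
  refine top_unique ?_
  calc ⊤ = ∑' n : ℕ, ENNReal.ofReal (θ / (θ + n)) :=
        (ENNReal.tsum_ofReal_div_add_natCast_eq_top hθ).symm
    _ = ∑' n : ℕ, p (n + 1) := tsum_congr fun n ↦ by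
        rw [hp (n + 1) (by omega), Nat.cast_succ, add_sub_assoc, add_sub_cancel_right]
    _ ≤ ∑' i, p i := ENNReal.tsum_comp_le_tsum_of_injective (add_left_injective 1) _

theorem div_add_natCast_sub_one_le_div {θ : ℝ} (hθ : 0 ≤ θ) {N n : ℕ} (hN : 0 < N) (hn : N < n) :
    θ / (θ + n - 1) ≤ θ / N := by
  have : (N : ℝ) + 1 ≤ n := by exact_mod_cast hn
  exact div_le_div_of_nonneg_left hθ (by exact_mod_cast hN) (by linarith)

theorem sInf_last_success_congr {N : ℕ} (hN : 1 ≤ N) {b b' : ℕ → Bool}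
    (h : ∀ i ∈ Icc 1 N, b i = b' i) :
    sInf {j : ℕ | 1 ≤ j ∧ b (N - j + 1) = true} = sInf {j : ℕ | 1 ≤ j ∧ b' (N - j + 1) = true} := by
  congr 1
  ext j
  constructor <;> rintro ⟨hj, hb⟩ <;> refine ⟨hj, ?_⟩
  · rwa [← h _ (mem_Icc.2 ⟨by omega, by omega⟩)]
  · rwa [h _ (mem_Icc.2 ⟨by omega, by omega⟩)]

theorem sInf_first_success_mem {N n : ℕ} {b : ℕ → Bool} (hn : N < n) (hb : b n = true) :
    1 ≤ sInf {k : ℕ | 1 ≤ k ∧ b (N + k) = true} ∧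
      b (N + sInf {k : ℕ | 1 ≤ k ∧ b (N + k) = true}) = true :=
  Nat.sInf_mem (s := {k : ℕ | 1 ≤ k ∧ b (N + k) = true})
    ⟨n - N, by omega, by rwa [Nat.add_sub_cancel' hn.le]⟩

section FellerCoupling

variable {Ω : Type*} {ξ : ℕ → Ω → Bool} {N : ℕ}

theorem isDeterminedBy_preimage_last_success {J : Ω → ℕ} (hN : 1 ≤ N)
    (hJ : ∀ ω, J ω = sInf {j : ℕ | 1 ≤ j ∧ ξ (N - j + 1) ω = true}) (m : ℕ) :
    IsDeterminedBy ξ (Icc 1 N) (J ⁻¹' {m}) := fun ω ω' hξ hω ↦ by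
  simp only [Set.mem_preimage, Set.mem_singleton_iff, hJ] at hω ⊢
  rw [← hω]
  exact (sInf_last_success_congr hN hξ).symm

theorem mem_biUnion_of_add_first_success_eq {J : Ω → ℕ} {ω : Ω} {j k : ℕ}
    (hk : k = sInf {j : ℕ | 1 ≤ j ∧ ξ (N + j) ω = true}) (hsucc : ∃ n > N, ξ n ω = true)
    (hJk : J ω + k = j + 1) :
    ω ∈ ⋃ m ∈ range (j + 1), J ⁻¹' {m} ∩ ξ (N + (j + 1 - m)) ⁻¹' {true} := by
  obtain ⟨n, hn, hξn⟩ := hsucc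
  obtain ⟨hk_pos, hξk⟩ := hk ▸ sInf_first_success_mem (b := (ξ · ω)) hn hξn
  refine Set.mem_biUnion (mem_range.2 (by omega : J ω < j + 1)) ⟨rfl, ?_⟩
  rwa [Set.mem_preimage, show N + (j + 1 - J ω) = N + k by omega]

end FellerCoupling

theorem stmt_14 {Ω : Type*} [MeasurableSpace Ω] (μ : Measure Ω) [IsProbabilityMeasure μ]
    (θ : ℝ) (hθ : 0 < θ) (N : ℕ) (hN : 1 ≤ N)
    (ξ : ℕ → Ω → Bool) (hmeas : ∀ i, Measurable (ξ i))
    (hindep : iIndepFun ξ μ)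
    (hdist : ∀ i : ℕ, 1 ≤ i → μ {ω | ξ i ω = true} = ENNReal.ofReal (θ / (θ + i - 1)))
    (J K : Ω → ℕ)
    (hJ : ∀ ω, J ω = sInf {j : ℕ | 1 ≤ j ∧ ξ (N - j + 1) ω = true})
    (hK : ∀ ω, K ω = sInf {j : ℕ | 1 ≤ j ∧ ξ (N + j) ω = true}) :
    ∀ j : ℕ, 1 ≤ j →
      μ {ω | J ω + K ω = j + 1} ≤ ENNReal.ofReal (θ / N) := by
  intro j _
  have hp : ∀ i, 1 ≤ i → μ (ξ i ⁻¹' {true}) = ENNReal.ofReal (θ / (θ + i - 1)) := hdist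
  have hK_finite := ae_exists_gt_eq_true_of_tsum_eq_top hmeas hindep
    (ENNReal.tsum_eq_top_of_eq_ofReal_div_add_sub_one hθ hp) N
  have hdet := isDeterminedBy_preimage_last_success hN hJ
  calc μ {ω | J ω + K ω = j + 1}
      ≤ μ (⋃ m ∈ range (j + 1), J ⁻¹' {m} ∩ ξ (N + (j + 1 - m)) ⁻¹' {true}) :=
        measure_mono_ae <| hK_finite.mono fun ω hω hJK ↦
          mem_biUnion_of_add_first_success_eq (hK ω) hω hJK
    _ ≤ ∑ m ∈ range (j + 1), μ (J ⁻¹' {m} ∩ ξ (N + (j + 1 - m)) ⁻¹' {true}) :=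
        measure_biUnion_finset_le _ _
    _ = ∑ m ∈ range (j + 1), μ (J ⁻¹' {m}) * μ (ξ (N + (j + 1 - m)) ⁻¹' {true}) :=
        sum_congr rfl fun m hm ↦ (hdet m).measure_inter_preimage_eq_mul hmeas hindep
          (by rw [mem_Icc]; rw [mem_range] at hm; omega) (measurableSet_singleton _)
    _ ≤ ∑ m ∈ range (j + 1), μ (J ⁻¹' {m}) * ENNReal.ofReal (θ / N) := by
        gcongr with m hm
        rw [mem_range] at hm
        rw [hp _ (by omega)]
        exact ENNReal.ofReal_le_ofReal (div_add_natCast_sub_one_le_div hθ.le hN (by omega))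
    _ = μ (J ⁻¹' ↑(range (j + 1))) * ENNReal.ofReal (θ / N) := by
        rw [← sum_mul, sum_measure_preimage_singleton _ fun m _ ↦ (hdet m).measurableSet hmeas]
    _ ≤ ENNReal.ofReal (θ / N) := mul_le_of_le_one_left' prob_le_one
end

section
/- Let θ > 0 and let (u_j)_{j≥1} be real numbers with Σ_{j=1}^∞ u_j²/j < ∞. Let (W_j)_{j≥1} be independent Poisson random variables with means θ/j, and set H_N = Σ_{j=1}^N u_j W_j. Then the characteristic function of H_N − E[H_N] converges pointwise, uniformly on compact sets, to φ(t) = exp(Σ_{j=1}^∞ (θ/j)(e^{i t u_j} − i t u_j − 1)); in particular H_N − E[H_N] converges in distribution to the infinitely divisible law with this characteristic function. -/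
open MeasureTheory ProbabilityTheory Finset Complex
open scoped NNReal Nat ComplexConjugate

/-!
Write `ψ_j(t) = (θ/j)(e^{itu_j} - itu_j - 1)`. The characteristic function of a Poisson variable
gives `E[e^{itu_j(W_j - θ/j)}] = exp ψ_j(t)`, so by independence the characteristic function of
`H_N - E[H_N]` is `exp (∑_{j ≤ N} ψ_j(t))`. From `|e^{ix} - ix - 1| ≤ x²/2` we get
`|ψ_j(t)| ≤ (t²/2) θ u_j²/j`, so the series `∑ ψ_j` converges uniformly on compact sets by the
M-test. Finally `Re ψ_j ≤ 0`, and `exp` is 1-Lipschitz on the closed left half-plane, so the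
exponentials converge uniformly as well.
-/

theorem Complex.norm_exp_I_mul_ofReal_sub_sub_one_le (x : ℝ) :
    ‖cexp (I * x) - I * x - 1‖ ≤ x ^ 2 / 2 := by
  set g : ℝ → ℂ := fun s => cexp (I * s) - I * s - 1
  have hg_deriv (s : ℝ) : HasDerivAt g (I * (cexp (I * s) - 1)) s := by
    have hlin : HasDerivAt (fun s : ℝ => I * (s : ℂ)) I s := by
      simpa using ((hasDerivAt_id s).ofReal_comp).const_mul I
    exact ((hlin.cexp.fun_sub hlin).sub_const 1).congr_deriv (by ring)
  have h_nonneg : ∀ x : ℝ, 0 ≤ x → ‖g x‖ ≤ x ^ 2 / 2 := by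
    intro x hx
    refine image_norm_le_of_norm_deriv_right_le_deriv_boundary (a := 0) (b := x)
      (f' := fun s => I * (cexp (I * s) - 1)) (B := fun s => s ^ 2 / 2) (B' := id)
      (fun s _ => (hg_deriv s).continuousAt.continuousWithinAt)
      (fun s _ => (hg_deriv s).hasDerivWithinAt) (by simp [g])
      (fun s => by simpa using (hasDerivAt_pow 2 s).div_const 2) (fun s hs => ?_) ⟨hx, le_rfl⟩
    rw [norm_mul, norm_I, one_mul]
    exact Real.norm_exp_I_mul_ofReal_sub_one_le.trans_eq (Real.norm_of_nonneg hs.1)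
  rcases le_total 0 x with hx | hx
  · exact h_nonneg x hx
  · have hconj : g (-x) = conj (g x) := by
      simp only [g, map_sub, map_mul, conj_I, ← exp_conj, conj_ofReal, map_one]
      push_cast
      ring_nf
    change ‖g x‖ ≤ _
    simpa [hconj, RCLike.norm_conj] using h_nonneg (-x) (neg_nonneg.mpr hx)

theorem Complex.norm_exp_sub_exp_le_of_re_nonpos {a b : ℂ} (ha : a.re ≤ 0) (hb : b.re ≤ 0) :
    ‖cexp a - cexp b‖ ≤ ‖a - b‖ := by
  have h := (convex_halfSpace_re_le 0).norm_image_sub_le_of_norm_hasDerivWithin_le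
    (f := cexp) (f' := cexp) (C := 1) (fun z _ => (hasDerivAt_exp z).hasDerivWithinAt)
    (fun z hz => by rw [norm_exp]; exact Real.exp_le_one_iff.mpr hz) hb ha
  rwa [one_mul] at h

theorem TendstoUniformlyOn.cexp_of_re_nonpos {ι α : Type*} {F : ι → α → ℂ} {f : α → ℂ}
    {l : Filter ι} {s : Set α} (h : TendstoUniformlyOn F f l s)
    (hF : ∀ i, ∀ x ∈ s, (F i x).re ≤ 0) (hf : ∀ x ∈ s, (f x).re ≤ 0) :
    TendstoUniformlyOn (fun i x => cexp (F i x)) (fun x => cexp (f x)) l s := by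
  rw [Metric.tendstoUniformlyOn_iff] at h ⊢
  intro ε hε
  filter_upwards [h ε hε] with i hi x hx
  rw [dist_eq_norm]
  exact (norm_exp_sub_exp_le_of_re_nonpos (hf x hx) (hF i x hx)).trans_lt
    ((dist_eq_norm _ _).symm.trans_lt (hi x hx))

theorem tendstoUniformlyOn_cexp_tsum_nat_of_re_nonpos {α : Type*} {f : ℕ → α → ℂ} {M : ℕ → ℝ}
    {s : Set α} (hM : Summable M) (hfM : ∀ n, ∀ x ∈ s, ‖f n x‖ ≤ M n)
    (hre : ∀ n, ∀ x ∈ s, (f n x).re ≤ 0) :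
    TendstoUniformlyOn (fun N x => cexp (∑ n ∈ range N, f n x)) (fun x => cexp (∑' n, f n x))
      Filter.atTop s := by
  refine (tendstoUniformlyOn_tsum_nat hM hfM).cexp_of_re_nonpos
    (fun N x hx => by rw [re_sum]; exact sum_nonpos fun n _ => hre n x hx) fun x hx => ?_
  rw [re_tsum (.of_norm_bounded hM fun n => hfM n x hx)]
  exact tsum_nonpos fun n => hre n x hx

theorem ProbabilityTheory.iIndepFun.integral_finset_prod_comp {Ω ι 𝕜 : Type*} [RCLike 𝕜]
    {mΩ : MeasurableSpace Ω} {μ : Measure Ω} {β : ι → Type*} {mβ : ∀ i, MeasurableSpace (β i)} {X : ∀ i, Ω → β i}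
    (hX : iIndepFun X μ) (mX : ∀ i, AEMeasurable (X i) μ) {f : ∀ i, β i → 𝕜}
    (hf : ∀ i, AEStronglyMeasurable (f i) (μ.map (X i))) (s : Finset ι) :
    ∫ ω, ∏ i ∈ s, f i (X i ω) ∂μ = ∏ i ∈ s, ∫ ω, f i (X i ω) ∂μ := by
  simp_rw [← Finset.prod_coe_sort s]
  exact (hX.precomp Subtype.val_injective).integral_fun_prod_comp (fun i : s => mX i)
    (fun i => hf i)

theorem map_eq_poissonMeasure {Ω : Type*} {mΩ : MeasurableSpace Ω} {μ : Measure Ω}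
    {X : Ω → ℕ} (hX : Measurable X) {r : ℝ≥0}
    (hlaw : ∀ k : ℕ, μ {ω | X ω = k} = ENNReal.ofReal (Real.exp (-r) * r ^ k / k !)) :
    μ.map X = poissonMeasure r :=
  Measure.ext_of_singleton fun k => by
    rw [Measure.map_apply hX (measurableSet_singleton k), poissonMeasure_singleton]
    exact hlaw k

noncomputable def compensatedPoissonExponent (r a t : ℝ) : ℂ :=
  r * (cexp (I * t * a) - I * t * a - 1)

theorem norm_compensatedPoissonExponent_le {r : ℝ} (hr : 0 ≤ r) (a t : ℝ) :
    ‖compensatedPoissonExponent r a t‖ ≤ t ^ 2 / 2 * (r * a ^ 2) := by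
  have h := norm_exp_I_mul_ofReal_sub_sub_one_le (t * a)
  rw [compensatedPoissonExponent, norm_mul, norm_real, Real.norm_of_nonneg hr]
  push_cast at h
  rw [← mul_assoc] at h
  calc r * ‖cexp (I * t * a) - I * t * a - 1‖ ≤ r * ((t * a) ^ 2 / 2) := by gcongr
    _ = t ^ 2 / 2 * (r * a ^ 2) := by ring

theorem re_compensatedPoissonExponent_nonpos {r : ℝ} (hr : 0 ≤ r) (a t : ℝ) :
    (compensatedPoissonExponent r a t).re ≤ 0 := by
  have h : (compensatedPoissonExponent r a t).re = r * (Real.cos (t * a) - 1) := by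
    simp [compensatedPoissonExponent, exp_re]
  rw [h]
  exact mul_nonpos_of_nonneg_of_nonpos hr (sub_nonpos.mpr (Real.cos_le_one _))

theorem integral_cexp_compensated_of_poisson {Ω : Type*} {mΩ : MeasurableSpace Ω}
    {μ : Measure Ω} {X : Ω → ℕ} (hX : Measurable X) {r : ℝ} (hr : 0 ≤ r)
    (hlaw : ∀ k : ℕ, μ {ω | X ω = k} = ENNReal.ofReal (Real.exp (-r) * r ^ k / k !))
    (a t : ℝ) :
    ∫ ω, cexp (I * t * ↑(a * ((X ω : ℝ) - r))) ∂μ = cexp (compensatedPoissonExponent r a t) := by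
  lift r to ℝ≥0 using hr
  have hcharFun : ∫ ω, cexp (↑(t * a) * ↑(X ω : ℝ) * I) ∂μ
      = charFun ((poissonMeasure r).map (Nat.cast : ℕ → ℝ)) (t * a) := by
    rw [charFun_apply_real, ← map_eq_poissonMeasure hX hlaw, Measure.map_map (by fun_prop) hX,
      integral_map (by fun_prop) (by fun_prop)]
    rfl
  calc ∫ ω, cexp (I * t * ↑(a * ((X ω : ℝ) - r))) ∂μ
      = ∫ ω, cexp (-(I * t * a * r)) * cexp (↑(t * a) * ↑(X ω : ℝ) * I) ∂μ := by
        congr! 2 with ω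
        rw [← Complex.exp_add]
        push_cast
        ring_nf
    _ = cexp (compensatedPoissonExponent r a t) := by
        rw [integral_const_mul, hcharFun, charFun_map_cast_poissonMeasure, ← Complex.exp_add,
          compensatedPoissonExponent]
        push_cast
        ring_nf

theorem integral_cexp_sum_compensated_of_iIndepFun_poisson {Ω ι : Type*}
    {mΩ : MeasurableSpace Ω} {μ : Measure Ω} {W : ι → Ω → ℕ} (hmeas : ∀ j, Measurable (W j))
    (hindep : iIndepFun W μ) {r : ι → ℝ} {s : Finset ι} (hr : ∀ j ∈ s, 0 ≤ r j)
    (hlaw : ∀ j ∈ s, ∀ k : ℕ,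
      μ {ω | W j ω = k} = ENNReal.ofReal (Real.exp (-r j) * r j ^ k / k !))
    (a : ι → ℝ) (t : ℝ) :
    ∫ ω, cexp (I * t * ↑(∑ j ∈ s, a j * ((W j ω : ℝ) - r j))) ∂μ
      = cexp (∑ j ∈ s, compensatedPoissonExponent (r j) (a j) t) := by
  have hprod (ω : Ω) : cexp (I * t * ↑(∑ j ∈ s, a j * ((W j ω : ℝ) - r j)))
      = ∏ j ∈ s, cexp (I * t * ↑(a j * ((W j ω : ℝ) - r j))) := by
    rw [← Complex.exp_sum, ofReal_sum, mul_sum]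
  simp_rw [hprod]
  rw [hindep.integral_finset_prod_comp (fun j => (hmeas j).aemeasurable)
      (f := fun j (n : ℕ) => cexp (I * t * ↑(a j * ((n : ℝ) - r j))))
      (fun j => .of_discrete) s, Complex.exp_sum]
  exact prod_congr rfl fun j hj =>
    integral_cexp_compensated_of_poisson (hmeas j) (hr j hj) (hlaw j hj) (a j) t

theorem stmt_16_general {Ω : Type*} [MeasurableSpace Ω] (μ : Measure Ω)
    (θ : ℝ) (hθ : 0 < θ) (u : ℕ → ℝ)
    (hsum : Summable (fun j : ℕ => u (j + 1) ^ 2 / ((j : ℝ) + 1)))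
    (W : ℕ → Ω → ℕ) (hmeas : ∀ j, Measurable (W j))
    (hindep : iIndepFun W μ)
    (hPoisson : ∀ j : ℕ, 1 ≤ j → ∀ k : ℕ,
      μ {ω | W j ω = k} =
        ENNReal.ofReal (Real.exp (-(θ / j)) * (θ / j) ^ k / (Nat.factorial k))) :
    ∀ K : Set ℝ, IsCompact K →
      TendstoUniformlyOn
        (fun (N : ℕ) (t : ℝ) =>
          ∫ ω, Complex.exp (Complex.I * t *
            (∑ j ∈ Finset.Icc 1 N, u j * ((W j ω : ℝ) - θ / j))) ∂μ)
        (fun t : ℝ => Complex.exp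
          (∑' j : ℕ, (θ / ((j : ℝ) + 1)) *
            (Complex.exp (Complex.I * t * u (j + 1)) - Complex.I * t * u (j + 1) - 1)))
        Filter.atTop K := by
  intro K hK
  obtain ⟨C, hC⟩ := hK.isBounded.subset_closedBall 0
  set ψ : ℕ → ℝ → ℂ := fun j t => compensatedPoissonExponent (θ / (j + 1 : ℕ)) (u (j + 1)) t
  have hψ_bound : ∀ j, ∀ t ∈ K, ‖ψ j t‖ ≤ C ^ 2 / 2 * θ * (u (j + 1) ^ 2 / ((j : ℝ) + 1)) := by
    intro j t ht
    have htC : t ^ 2 ≤ C ^ 2 := by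
      simpa using pow_le_pow_left₀ (norm_nonneg t) (mem_closedBall_zero_iff.mp (hC ht)) 2
    calc ‖ψ j t‖ ≤ t ^ 2 / 2 * (θ / (j + 1 : ℕ) * u (j + 1) ^ 2) :=
          norm_compensatedPoissonExponent_le (by positivity) _ _
      _ ≤ C ^ 2 / 2 * (θ / (j + 1 : ℕ) * u (j + 1) ^ 2) := by gcongr
      _ = C ^ 2 / 2 * θ * (u (j + 1) ^ 2 / ((j : ℝ) + 1)) := by push_cast; ring
  have hchar (N : ℕ) (t : ℝ) :
      ∫ ω, cexp (I * t * ↑(∑ j ∈ Icc 1 N, u j * ((W j ω : ℝ) - θ / j))) ∂μ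
        = cexp (∑ j ∈ range N, ψ j t) := by
    rw [integral_cexp_sum_compensated_of_iIndepFun_poisson hmeas hindep
      (fun j _ => by positivity) (fun j hj => hPoisson j (mem_Icc.mp hj).1), range_eq_Ico,
      sum_Ico_add' (fun j : ℕ => compensatedPoissonExponent (θ / j) (u j) t), zero_add,
      Ico_add_one_right_eq_Icc]
  refine (tendstoUniformlyOn_cexp_tsum_nat_of_re_nonpos (hsum.mul_left _) hψ_bound
    fun j t _ => re_compensatedPoissonExponent_nonpos (by positivity) _ _).congr
    (.of_forall fun N t _ => (hchar N t).symm) |>.congr_right fun t _ => ?_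
  simp only [ψ, compensatedPoissonExponent]
  push_cast
  rfl

theorem stmt_16 {Ω : Type*} [MeasurableSpace Ω] (μ : Measure Ω) [IsProbabilityMeasure μ]
    (θ : ℝ) (hθ : 0 < θ) (u : ℕ → ℝ)
    (hsum : Summable (fun j : ℕ => u (j + 1) ^ 2 / ((j : ℝ) + 1)))
    (W : ℕ → Ω → ℕ) (hmeas : ∀ j, Measurable (W j))
    (hindep : iIndepFun W μ)
    (hPoisson : ∀ j : ℕ, 1 ≤ j → ∀ k : ℕ,
      μ {ω | W j ω = k} =
        ENNReal.ofReal (Real.exp (-(θ / j)) * (θ / j) ^ k / (Nat.factorial k))) :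
    ∀ K : Set ℝ, IsCompact K →
      TendstoUniformlyOn
        (fun (N : ℕ) (t : ℝ) =>
          ∫ ω, Complex.exp (Complex.I * t *
            (∑ j ∈ Finset.Icc 1 N, u j * ((W j ω : ℝ) - θ / j))) ∂μ)
        (fun t : ℝ => Complex.exp
          (∑' j : ℕ, (θ / ((j : ℝ) + 1)) *
            (Complex.exp (Complex.I * t * u (j + 1)) - Complex.I * t * u (j + 1) - 1)))
        Filter.atTop K :=
  stmt_16_general μ θ hθ u hsum W hmeas hindep hPoisson
end
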